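/- arXiv:1805.09793 — 3 statements merged into one kernel-verified Lean document; each statement's English description precedes it below -/
import Mathlib

section
/- Let X be a binomial random variable with parameters n and p, i.e., X ~ Bin(n, p). Then for any real number k with n·p < k < n, we have P(X ≥ k) ≤ exp(−n·D(k/n ‖ p)), where D(a ‖ b) denotes the Kullback–Leibler divergence between Bernoulli distributions with parameters a and b. -/
open Real Finset

/-- The Kullback–Leibler divergence between Bernoulli distributions with parameters `a` and `b`. -/
noncomputable def bernoulliKL (a b : ℝ) : ℝ :=
  a * Real.log (a / b) + (1 - a) * Real.log ((1 - a) / (1 - b))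

/-- The probability mass function of the binomial distribution `Bin(n, p)` at `i`. -/
noncomputable def binomialPMF (n : ℕ) (p : ℝ) (i : ℕ) : ℝ :=
  (n.choose i : ℝ) * p ^ i * (1 - p) ^ (n - i)

/-!
Chernoff's method: for every `r ≥ 1`, Markov's inequality applied to `r ^ X` bounds `P(X ≥ k)` by
`r ^ (-k) · E[r ^ X] = r ^ (-k) · (p r + 1 - p) ^ n`. The choice of `r` that minimises this bound
is the odds ratio of `k / n` against `p`, and for it the bound equals `exp (-n · D(k/n ‖ p))`.
-/

lemma binomialPMF_nonneg {p : ℝ} (hp : 0 ≤ p) (hp1 : p ≤ 1) (n i : ℕ) :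
    0 ≤ binomialPMF n p i := by
  unfold binomialPMF
  have : 0 ≤ 1 - p := by linarith
  positivity

lemma sum_binomialPMF_mul_pow (n : ℕ) (p t : ℝ) :
    ∑ i ∈ range (n + 1), binomialPMF n p i * t ^ i = (p * t + (1 - p)) ^ n := by
  rw [add_pow]
  refine sum_congr rfl fun i _ => ?_
  rw [binomialPMF, mul_pow]
  ring

lemma sum_ite_le_rpow_neg_mul_sum {s : Finset ℕ} {f : ℕ → ℝ} (hf : ∀ i ∈ s, 0 ≤ f i)
    {r : ℝ} (hr : 1 ≤ r) (k : ℝ) :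
    ∑ i ∈ s, (if k ≤ (i : ℝ) then f i else 0) ≤ r ^ (-k) * ∑ i ∈ s, f i * r ^ i := by
  rw [mul_sum]
  refine sum_le_sum fun i hi => ?_
  split_ifs with hki
  · have h : 1 ≤ r ^ (-k) * r ^ i := by
      rw [← rpow_natCast, ← rpow_add (by linarith)]
      exact one_le_rpow hr (by linarith)
    nlinarith [hf i hi]
  · exact mul_nonneg (rpow_nonneg (by linarith) _) (mul_nonneg (hf i hi) (by positivity))

lemma binomial_tail_le_rpow_neg_mul_pow {p : ℝ} (hp : 0 ≤ p) (hp1 : p ≤ 1) (n : ℕ)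
    {r : ℝ} (hr : 1 ≤ r) (k : ℝ) :
    ∑ i ∈ range (n + 1), (if k ≤ (i : ℝ) then binomialPMF n p i else 0)
      ≤ r ^ (-k) * (p * r + (1 - p)) ^ n := by
  rw [← sum_binomialPMF_mul_pow]
  exact sum_ite_le_rpow_neg_mul_sum (fun i _ => binomialPMF_nonneg hp hp1 n i) hr k

noncomputable def oddsRatio (a b : ℝ) : ℝ :=
  a * (1 - b) / ((1 - a) * b)

lemma one_lt_oddsRatio {a b : ℝ} (hb : 0 < b) (hba : b < a) (ha1 : a < 1) :
    1 < oddsRatio a b := by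
  rw [oddsRatio, one_lt_div (mul_pos (by linarith) hb)]
  nlinarith

lemma mul_oddsRatio_add_one_sub {a b : ℝ} (ha1 : a ≠ 1) (hb : b ≠ 0) :
    b * oddsRatio a b + (1 - b) = (1 - b) / (1 - a) := by
  have : 1 - a ≠ 0 := sub_ne_zero.mpr (Ne.symm ha1)
  rw [oddsRatio]
  field_simp
  ring

lemma bernoulliKL_eq_mul_log_oddsRatio_sub {a b : ℝ} (ha : 0 < a) (ha1 : a < 1)
    (hb : 0 < b) (hb1 : b < 1) :
    bernoulliKL a b = a * log (oddsRatio a b) - log ((1 - b) / (1 - a)) := by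
  have ha' : (1 - a) ≠ 0 := by linarith
  have hb' : (1 - b) ≠ 0 := by linarith
  rw [bernoulliKL, oddsRatio, log_div (by positivity) (mul_ne_zero ha' hb.ne'),
    log_mul ha.ne' hb', log_mul ha' hb.ne', log_div ha.ne' hb.ne', log_div ha' hb',
    log_div hb' ha']
  ring

lemma rpow_neg_oddsRatio_mul_pow {a b : ℝ} (ha : 0 < a) (ha1 : a < 1)
    (hb : 0 < b) (hb1 : b < 1) (n : ℕ) :
    oddsRatio a b ^ (-(n * a)) * ((1 - b) / (1 - a)) ^ n = exp (-n * bernoulliKL a b) := by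
  have hr : 0 < oddsRatio a b := by
    unfold oddsRatio
    exact div_pos (mul_pos ha (by linarith)) (mul_pos (by linarith) hb)
  have hq : 0 < (1 - b) / (1 - a) := div_pos (by linarith) (by linarith)
  rw [rpow_def_of_pos hr, ← exp_log hq, ← exp_nat_mul, ← exp_add,
    bernoulliKL_eq_mul_log_oddsRatio_sub ha ha1 hb hb1]
  congr 1
  ring

/-- **Binomial tail bound.** If `X ~ Bin(n, p)` then for any real `k` with `n·p < k < n`,
`P(X ≥ k) ≤ exp(−n·D(k/n ‖ p))`. -/
theorem binomial_tail_bound (n : ℕ) (p : ℝ) (hp : 0 < p) (hp1 : p < 1)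
    (k : ℝ) (hk1 : (n : ℝ) * p < k) (hk2 : k < n) :
    ∑ i ∈ Finset.range (n + 1), (if k ≤ (i : ℝ) then binomialPMF n p i else 0)
      ≤ Real.exp (-(n : ℝ) * bernoulliKL (k / n) p) := by
  have hn : (0 : ℝ) < n := by nlinarith
  set a := k / n
  have hk : k = n * a := (mul_div_cancel₀ k hn.ne').symm
  have hpa : p < a := (lt_div_iff₀ hn).mpr (by linarith)
  have ha1 : a < 1 := (div_lt_one hn).mpr hk2
  have hr := one_lt_oddsRatio hp hpa ha1
  calc _ ≤ oddsRatio a p ^ (-k) * (p * oddsRatio a p + (1 - p)) ^ n :=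
        binomial_tail_le_rpow_neg_mul_pow hp.le hp1.le n hr.le k
    _ = exp (-n * bernoulliKL a p) := by
        rw [mul_oddsRatio_add_one_sub ha1.ne hp.ne', hk,
          rpow_neg_oddsRatio_mul_pow (hp.trans hpa) ha1 hp hp1]
end

section
/- Let m ≥ 15 be an integer and let Z be a binomial random variable with parameters m+2 and 1/(m+2), i.e., Z ~ Bin(m+2, 1/(m+2)). Then P(Z ≥ (m+2)/4) < exp(−(m+2)·log(m+2)/20), and consequently P(Z ≥ (m+2)/4) < exp(−m·log(m)/20). -/
/-!
Since `p = 1/n` gives mean `np = 1`, `P(Z = i) ≤ C(n, i) n^{-i} ≤ 1/i!`, so the tail of `Z` from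
`k = ⌈n/4⌉` on is at most the tail `∑_{i ≥ k} 1/i! ≤ (k+1)/(k·k!)` of the series for `e`.
It remains to compare `k!` with `n^{n/20} ≤ (4k)^{k/5}`: by induction `5^5 (4k)^k ≤ (k!)^5` for
`k ≥ 5`, because going from `k` to `k+1` multiplies the left side by
`4(k+1)(1+1/k)^k ≤ 4e(k+1) ≤ (k+1)^5`. The second bound holds as `x log x` increases on `[1, ∞)`.
-/

open Real Finset

open scoped Nat

lemma binomialPMF_le_pow_div_factorial {p : ℝ} (hp₀ : 0 ≤ p) (hp₁ : p ≤ 1) (n i : ℕ) :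
    binomialPMF n p i ≤ (n * p) ^ i / i ! :=
  calc binomialPMF n p i ≤ (n.choose i : ℝ) * p ^ i := by
        unfold binomialPMF
        exact mul_le_of_le_one_right (by positivity) (pow_le_one₀ (by linarith) (by linarith))
    _ ≤ (n ^ i / i ! : ℝ) * p ^ i := by gcongr; exact Nat.choose_le_pow_div i n
    _ = (n * p) ^ i / i ! := by ring

lemma binomialPMF_inv_le_inv_factorial (n i : ℕ) :
    binomialPMF n (1 / n) i ≤ 1 / i ! := by
  rcases Nat.eq_zero_or_pos n with rfl | hn
  · rcases i with _ | i <;> simp [binomialPMF]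
  have hn' : (1 : ℝ) ≤ n := by exact_mod_cast hn
  calc binomialPMF n (1 / n) i ≤ (n * (1 / n)) ^ i / i ! :=
        binomialPMF_le_pow_div_factorial (by positivity) (div_le_one_of_le₀ hn' (by positivity)) n i
    _ = 1 / i ! := by rw [mul_one_div_cancel (by positivity), one_pow]

lemma succ_pow_le_three_mul_pow (k : ℕ) : (k + 1) ^ k ≤ 3 * k ^ k := by
  rcases Nat.eq_zero_or_pos k with rfl | hk
  · simp
  have hk' : (0 : ℝ) < k := by exact_mod_cast hk
  have : ((k + 1 : ℕ) : ℝ) ^ k ≤ 3 * (k : ℝ) ^ k :=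
    calc ((k + 1 : ℕ) : ℝ) ^ k = (1 + (k : ℝ)⁻¹) ^ k * (k : ℝ) ^ k := by
          rw [← mul_pow]; push_cast; field_simp
      _ ≤ 3 * (k : ℝ) ^ k := by
          gcongr
          exact one_add_inv_pow_le_exp.trans (exp_one_lt_d9.trans (by norm_num)).le
  exact_mod_cast this

lemma five_pow_mul_four_mul_pow_le_factorial_pow {k : ℕ} (hk : 5 ≤ k) :
    5 ^ 5 * (4 * k) ^ k ≤ k ! ^ 5 := by
  induction k, hk using Nat.le_induction with
  | base => decide
  | succ k hk ih =>
    have h12 : 12 ≤ (k + 1) ^ 4 :=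
      le_trans (by norm_num) (Nat.pow_le_pow_left (by omega : 6 ≤ k + 1) 4)
    calc 5 ^ 5 * (4 * (k + 1)) ^ (k + 1) = 4 * (k + 1) * 4 ^ k * (k + 1) ^ k * 5 ^ 5 := by
          rw [mul_pow, pow_succ, pow_succ]; ring
      _ ≤ 4 * (k + 1) * 4 ^ k * (3 * k ^ k) * 5 ^ 5 := by gcongr; exact succ_pow_le_three_mul_pow k
      _ = 12 * (k + 1) * (5 ^ 5 * (4 * k) ^ k) := by ring
      _ ≤ (k + 1) ^ 4 * (k + 1) * k ! ^ 5 := by gcongr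
      _ = (k + 1)! ^ 5 := by rw [Nat.factorial_succ]; ring

lemma mul_log_le_mul_log {x y : ℝ} (hx : 1 ≤ x) (hxy : x ≤ y) : x * log x ≤ y * log y :=
  mul_le_mul hxy (log_le_log (by linarith) hxy) (log_nonneg hx) (by linarith)

lemma five_mul_exp_mul_log_div_twenty_le_factorial {x : ℝ} {k : ℕ} (hk : 5 ≤ k) (hx : 1 ≤ x)
    (hxk : x ≤ 4 * k) : 5 * exp (x * log x / 20) ≤ k ! := by
  have hk' : (0 : ℝ) < k := by exact_mod_cast (by omega : 0 < k)
  have hpow : (5 * exp (4 * k * log (4 * k) / 20)) ^ 5 = 5 ^ 5 * (4 * k : ℝ) ^ k := by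
    rw [mul_pow, ← exp_nat_mul, show (5 : ℕ) * (4 * k * log (4 * k) / 20) = k * log (4 * k) by
      push_cast; ring, ← log_pow, exp_log (by positivity)]
  calc 5 * exp (x * log x / 20) ≤ 5 * exp (4 * k * log (4 * k) / 20) := by
        gcongr 5 * exp (?_ / 20); exact mul_log_le_mul_log hx hxk
    _ ≤ k ! := by
        rw [← pow_le_pow_iff_left₀ (by positivity) (by positivity) (by norm_num : 5 ≠ 0), hpow]
        exact_mod_cast five_pow_mul_four_mul_pow_le_factorial_pow hk

lemma sum_binomialPMF_inv_filter_le (n : ℕ) {k : ℕ} (hk : 0 < k) :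
    ∑ i ∈ range (n + 1) with k ≤ i, binomialPMF n (1 / n) i ≤ k.succ / (k ! * k) :=
  calc ∑ i ∈ range (n + 1) with k ≤ i, binomialPMF n (1 / n) i
      ≤ ∑ i ∈ range (n + 1) with k ≤ i, (1 / i ! : ℝ) :=
        sum_le_sum fun i _ ↦ binomialPMF_inv_le_inv_factorial n i
    _ ≤ k.succ / (k ! * k) := Complex.sum_div_factorial_le k (n + 1) hk

lemma succ_div_factorial_mul_lt_exp_neg_mul_log {x : ℝ} {k : ℕ} (hk : 5 ≤ k) (hx : 1 ≤ x)
    (hxk : x ≤ 4 * k) : (k.succ : ℝ) / (k ! * k) < exp (-(x * log x) / 20) := by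
  have hexp := five_mul_exp_mul_log_div_twenty_le_factorial hk hx hxk
  have hk' : (5 : ℝ) ≤ k := by exact_mod_cast hk
  rw [neg_div, exp_neg, div_lt_iff₀ (by positivity), inv_mul_eq_div, lt_div_iff₀ (exp_pos _)]
  push_cast
  have hfac : (0 : ℝ) < k ! := by positivity
  nlinarith [mul_le_mul_of_nonneg_left hexp (by positivity : (0 : ℝ) ≤ k + 1)]

/-- If `m ≥ 15` and `Z ~ Bin(m+2, 1/(m+2))`, then
`P(Z ≥ (m+2)/4) < exp(−(m+2)·log(m+2)/20)` and consequently
`P(Z ≥ (m+2)/4) < exp(−m·log(m)/20)`. -/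
theorem binomial_bootstrap_tail (m : ℕ) (hm : 15 ≤ m) :
    (∑ i ∈ Finset.range (m + 3),
        (if ((m : ℝ) + 2) / 4 ≤ (i : ℝ) then binomialPMF (m + 2) (1 / ((m : ℝ) + 2)) i else 0))
      < Real.exp (-(((m : ℝ) + 2) * Real.log ((m : ℝ) + 2)) / 20) ∧
    (∑ i ∈ Finset.range (m + 3),
        (if ((m : ℝ) + 2) / 4 ≤ (i : ℝ) then binomialPMF (m + 2) (1 / ((m : ℝ) + 2)) i else 0))
      < Real.exp (-((m : ℝ) * Real.log (m : ℝ)) / 20) := by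
  have hm' : (15 : ℝ) ≤ m := by exact_mod_cast hm
  rw [← sum_filter]
  simp_rw [← Nat.ceil_le]
  set k := ⌈((m : ℝ) + 2) / 4⌉₊
  have hk : 5 ≤ k := Nat.lt_ceil.2 (by linarith)
  have hfirst := (sum_binomialPMF_inv_filter_le (m + 2) (by omega : 0 < k)).trans_lt
    (succ_div_factorial_mul_lt_exp_neg_mul_log hk (x := (m : ℝ) + 2) (by linarith)
      (by linarith [Nat.le_ceil (((m : ℝ) + 2) / 4)]))
  push_cast at hfirst
  refine ⟨hfirst, hfirst.trans_le (exp_le_exp.2 ?_)⟩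
  gcongr -?_ / _
  exact mul_log_le_mul_log (x := m) (y := m + 2) (by linarith) (by linarith)
end

section
/- Let γ ∈ (0,1) and let T be a real number with T ≥ exp((2/γ)·exp(80/γ)). Set m = ⌈γ·log(T)/2⌉. Then (2^{−m}/8)·min{ exp(m·log(m)/20), T/4 } > T^{1−γ}/32. -/
open Real

/-! With `L = log T` and `m = ⌈γL/2⌉`, the hypothesis on `T` gives `m ≥ exp (80/γ)`, hence
`log m ≥ 80/γ` and `m log m / 20 ≥ 2L`: the first entry of the minimum is at least `T²`, so the
minimum is `T/4`. On the other hand `m < γL/2 + 1 ≤ γL` and `log 2 < 1` give `2^m < exp (γL) = T^γ`,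
so `2^{-m} T/32 > T^{1-γ}/32`. -/

lemma mul_le_ceil_mul_log_ceil {c x : ℝ} (hx : exp c ≤ x) :
    x * c ≤ ⌈x⌉ * log ⌈x⌉ := by
  have hx_pos : 0 < x := (exp_pos c).trans_le hx
  have hx_ceil : x ≤ ⌈x⌉ := Int.le_ceil x
  have hc_log : c ≤ log ⌈x⌉ :=
    (le_log_iff_exp_le (hx_pos.trans_le hx_ceil)).2 (hx.trans hx_ceil)
  have hceil_one : (1 : ℝ) ≤ ⌈x⌉ := by exact_mod_cast Int.one_le_ceil_iff.2 hx_pos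
  exact mul_le_mul_of_nonneg hx_ceil hc_log hx_pos.le (log_nonneg hceil_one)

lemma two_zpow_ceil_lt_exp {x : ℝ} (hx : 1 ≤ x) : (2 : ℝ) ^ ⌈x⌉ < exp (2 * x) := by
  have hceil_pos : (0 : ℝ) < ⌈x⌉ := by exact_mod_cast Int.ceil_pos.2 (by linarith)
  have hexponent : ⌈x⌉ * log 2 < 2 * x :=
    calc ⌈x⌉ * log 2 < ⌈x⌉ := mul_lt_of_lt_one_right hceil_pos (log_two_lt_d9.trans (by norm_num))
      _ < x + 1 := Int.ceil_lt_add_one x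
      _ ≤ 2 * x := by linarith
  rw [← rpow_intCast, rpow_def_of_pos two_pos, mul_comm]
  exact exp_lt_exp.2 hexponent

/-- Let `γ ∈ (0,1)`, `T ≥ exp((2/γ)·exp(80/γ))`, and `m = ⌈γ·log(T)/2⌉`. Then
`(2^{−m}/8)·min{ exp(m·log(m)/20), T/4 } > T^{1−γ}/32`. -/
theorem regret_lower_bound_final_step (γ T : ℝ) (hγ : γ ∈ Set.Ioo (0 : ℝ) 1)
    (hT : T ≥ Real.exp ((2 / γ) * Real.exp (80 / γ))) :
    ((2 : ℝ) ^ (-⌈γ * Real.log T / 2⌉) / 8) *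
        min (Real.exp ((⌈γ * Real.log T / 2⌉ : ℝ) * Real.log (⌈γ * Real.log T / 2⌉ : ℝ) / 20))
          (T / 4)
      > T ^ (1 - γ) / 32 := by
  have hγ0 : 0 < γ := hγ.1
  have hT1 : 1 ≤ T := (one_le_exp (by positivity)).trans hT
  have hT_pos : 0 < T := by linarith
  set x := γ * log T / 2 with hx
  have hx_large : exp (80 / γ) ≤ x := by
    have hlog : (2 / γ) * exp (80 / γ) ≤ log T := (le_log_iff_exp_le hT_pos).2 hT
    rw [hx, le_div_iff₀ two_pos]
    calc exp (80 / γ) * 2 = γ * ((2 / γ) * exp (80 / γ)) := by field_simp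
      _ ≤ γ * log T := by gcongr
  have hx_one : 1 ≤ x := (one_le_exp (by positivity)).trans hx_large
  have hmin : min (exp (⌈x⌉ * log ⌈x⌉ / 20)) (T / 4) = T / 4 := by
    refine min_eq_right ?_
    calc T / 4 ≤ T * T := by nlinarith
      _ = exp (x * (80 / γ) / 20) := by
        rw [show x * (80 / γ) / 20 = log T + log T by rw [hx]; field_simp; ring,
          exp_add, exp_log hT_pos]
      _ ≤ exp (⌈x⌉ * log ⌈x⌉ / 20) := by gcongr exp (?_ / 20); exact mul_le_ceil_mul_log_ceil hx_large
  have htwo_pow : (2 : ℝ) ^ ⌈x⌉ < T ^ γ :=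
    calc (2 : ℝ) ^ ⌈x⌉ < exp (2 * x) := two_zpow_ceil_lt_exp hx_one
      _ = T ^ γ := by rw [rpow_def_of_pos hT_pos, hx]; ring_nf
  rw [hmin, zpow_neg, rpow_sub hT_pos, rpow_one, gt_iff_lt]
  calc T / T ^ γ / 32 < T / 2 ^ ⌈x⌉ / 32 := by gcongr
    _ = _ := by field_simp; ring
end
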